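/- Claim in the proof of Lemma 2.5: Let (A, m) be a local noetherian ring, let L →^α M →^β N and L →^{α'} M →^{β'} N be two complexes of finite A-modules (i.e., β∘α = 0 and β'∘α' = 0), and let c be a positive integer. Assume that (a) the first sequence is exact at M (im α = ker β), (b) the two complexes agree modulo m^{c+1}, i.e., (α − α')(L) ⊆ m^{c+1}M and (β − β')(M) ⊆ m^{c+1}N, and (c) the condition (AR)_c holds for α and for β. Then for every n ≥ c one has (β')^{-1}(m^n N) ⊆ α'(L) + m^{n−c}M. -/

import Mathlib

open IsLocalRing

/-- The Artin–Rees condition `(AR)_c` for a morphism `φ : M → N` of modules over a local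
ring `(A, 𝔪)`: for all `n ≥ c`, `φ(M) ∩ 𝔪^n N ⊆ φ(𝔪^(n-c) M)`. -/
def ArtinReesCond {A : Type*} [CommRing A] [IsLocalRing A]
    {M N : Type*} [AddCommGroup M] [Module A M] [AddCommGroup N] [Module A N]
    (c : ℕ) (φ : M →ₗ[A] N) : Prop :=
  ∀ n : ℕ, c ≤ n →
    LinearMap.range φ ⊓ ((maximalIdeal A) ^ n • ⊤ : Submodule A N) ≤
      Submodule.map φ ((maximalIdeal A) ^ (n - c) • ⊤ : Submodule A M)

/-!
Induction on `n`. If `β' x ∈ 𝔪^(n+1) N` and `x = α' y + z` with `z ∈ 𝔪^(n-c) M`, then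
`β z ≡ β' z = β' x` modulo `𝔪^(n+1) N`, so `(AR)_c` for `β` and exactness put `z` in
`α(L) + 𝔪^(n+1-c) M`. The `α`-part lies in `α(L) ∩ 𝔪^(n-c) M`, which `(AR)_c` for `α` pulls back
to `α(𝔪^(n-2c) L)`; there `α` and `α'` differ by an element of `𝔪^(n+1-c) M`.
-/

open LinearMap Submodule

theorem Submodule.map_pow_smul_top_le {A M N : Type*} [CommRing A] [AddCommGroup M] [Module A M]
    [AddCommGroup N] [Module A N] {I : Ideal A} {a b : ℕ} {f : M →ₗ[A] N}
    (hf : range f ≤ I ^ b • ⊤) : map f (I ^ a • ⊤) ≤ I ^ (a + b) • ⊤ := by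
  rw [map_smul'', Submodule.map_top, pow_add, ← smul_eq_mul, smul_assoc]
  exact smul_mono_right _ hf

section ArtinRees

variable {A L M N : Type*} [CommRing A] [IsLocalRing A]
  [AddCommGroup L] [Module A L] [AddCommGroup M] [Module A M] [AddCommGroup N] [Module A N]
  {c : ℕ}

local notation "𝔪" => maximalIdeal A

-- For `n < c` the truncated exponent `n - c` is `0` and the inclusion is trivial.
theorem ArtinReesCond.range_inf_le {φ : M →ₗ[A] N} (h : ArtinReesCond c φ) (n : ℕ) :
    range φ ⊓ (𝔪 ^ n • ⊤ : Submodule A N) ≤ map φ (𝔪 ^ (n - c) • ⊤) := by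
  rcases le_or_gt c n with hcn | hnc
  · exact h n hcn
  · rw [Nat.sub_eq_zero_of_le hnc.le, pow_zero, Ideal.one_eq_top, top_smul, Submodule.map_top]
    exact inf_le_left

theorem ArtinReesCond.comap_le {φ : M →ₗ[A] N} (h : ArtinReesCond c φ) (n : ℕ) :
    comap φ (𝔪 ^ n • ⊤) ≤ ker φ ⊔ 𝔪 ^ (n - c) • ⊤ := by
  intro x hx
  obtain ⟨w, hw, hwx⟩ := h.range_inf_le n ⟨mem_range_self φ x, hx⟩
  have hker : x - w ∈ ker φ := by rw [mem_ker, map_sub, hwx, sub_self]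
  simpa using add_mem_sup hker hw

theorem ArtinReesCond.range_inf_le_range_sup {α α' : L →ₗ[A] M} (hAR : ArtinReesCond c α)
    (hα : range (α - α') ≤ 𝔪 ^ (c + 1) • ⊤) (k : ℕ) :
    range α ⊓ (𝔪 ^ k • ⊤ : Submodule A M) ≤ range α' ⊔ 𝔪 ^ (k + 1) • ⊤ := by
  intro x hx
  obtain ⟨u, hu, rfl⟩ := hAR.range_inf_le k hx
  have hdiff : (α - α') u ∈ (𝔪 ^ (k + 1) • ⊤ : Submodule A M) :=
    smul_mono_left (Ideal.pow_le_pow_right (by omega)) (map_pow_smul_top_le hα ⟨u, hu, rfl⟩)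
  simpa using add_mem_sup (mem_range_self α' u) hdiff

theorem comap_inf_le_range_sup {α α' : L →ₗ[A] M} {β β' : M →ₗ[A] N}
    (hexact : range α = ker β) (hα : range (α - α') ≤ 𝔪 ^ (c + 1) • ⊤)
    (hβ : range (β - β') ≤ 𝔪 ^ (c + 1) • ⊤) (hARα : ArtinReesCond c α)
    (hARβ : ArtinReesCond c β) {n : ℕ} (hn : c ≤ n) :
    comap β' (𝔪 ^ (n + 1) • ⊤) ⊓ 𝔪 ^ (n - c) • ⊤ ≤ range α' ⊔ 𝔪 ^ (n + 1 - c) • ⊤ := by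
  have hsucc : n - c + 1 = n + 1 - c := by omega
  have hβz : comap β' (𝔪 ^ (n + 1) • ⊤) ⊓ 𝔪 ^ (n - c) • ⊤ ≤ comap β (𝔪 ^ (n + 1) • ⊤) := by
    rintro z ⟨hβ'z, hz⟩
    have hdiff : (β - β') z ∈ (𝔪 ^ (n + 1) • ⊤ : Submodule A N) := by
      simpa [show n - c + (c + 1) = n + 1 by omega] using map_pow_smul_top_le hβ ⟨z, hz, rfl⟩
    simpa using add_mem (mem_comap.1 hβ'z) hdiff
  have hle : (𝔪 ^ (n + 1 - c) • ⊤ : Submodule A M) ≤ 𝔪 ^ (n - c) • ⊤ :=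
    smul_mono_left (Ideal.pow_le_pow_right (by omega))
  calc comap β' (𝔪 ^ (n + 1) • ⊤) ⊓ 𝔪 ^ (n - c) • ⊤
      ≤ (range α ⊔ 𝔪 ^ (n + 1 - c) • ⊤) ⊓ 𝔪 ^ (n - c) • ⊤ :=
        le_inf (hβz.trans (hexact ▸ hARβ.comap_le (n + 1))) inf_le_right
    _ = range α ⊓ 𝔪 ^ (n - c) • ⊤ ⊔ 𝔪 ^ (n + 1 - c) • ⊤ := by
        rw [sup_comm, sup_inf_assoc_of_le _ hle, sup_comm]
    _ ≤ range α' ⊔ 𝔪 ^ (n + 1 - c) • ⊤ :=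
        sup_le (hsucc ▸ hARα.range_inf_le_range_sup hα (n - c)) le_sup_right

end ArtinRees

theorem claim_in_proof_of_lemma_2_5_general {A : Type*} [CommRing A] [IsLocalRing A]
    {L M N : Type*} [AddCommGroup L] [Module A L] [AddCommGroup M] [Module A M]
    [AddCommGroup N] [Module A N]
    (α α' : L →ₗ[A] M) (β β' : M →ₗ[A] N)
    (hcx' : β'.comp α' = 0)
    (c : ℕ)
    (hexact : LinearMap.range α = LinearMap.ker β)
    (hα : ∀ x : L, α x - α' x ∈ ((maximalIdeal A) ^ (c + 1) • ⊤ : Submodule A M))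
    (hβ : ∀ x : M, β x - β' x ∈ ((maximalIdeal A) ^ (c + 1) • ⊤ : Submodule A N))
    (hARα : ArtinReesCond c α) (hARβ : ArtinReesCond c β) :
    ∀ n : ℕ, c ≤ n →
      Submodule.comap β' ((maximalIdeal A) ^ n • ⊤ : Submodule A N) ≤
        LinearMap.range α' ⊔ ((maximalIdeal A) ^ (n - c) • ⊤ : Submodule A M) := by
  intro n hn
  induction n, hn using Nat.le_induction with
  | base =>
    rw [Nat.sub_self, pow_zero, Ideal.one_eq_top, top_smul]
    exact le_sup_of_le_right le_top
  | succ n hn ih =>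
    have hα'β' : range α' ≤ comap β' (maximalIdeal A ^ (n + 1) • ⊤) :=
      (range_le_ker_iff.2 hcx').trans (comap_mono bot_le)
    calc comap β' (maximalIdeal A ^ (n + 1) • ⊤)
        ≤ (range α' ⊔ maximalIdeal A ^ (n - c) • ⊤) ⊓ comap β' (maximalIdeal A ^ (n + 1) • ⊤) :=
          le_inf ((comap_mono (smul_mono_left (Ideal.pow_le_pow_right n.le_succ))).trans ih) le_rfl
      _ = range α' ⊔ comap β' (maximalIdeal A ^ (n + 1) • ⊤) ⊓ maximalIdeal A ^ (n - c) • ⊤ := by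
          rw [sup_inf_assoc_of_le _ hα'β', inf_comm]
      _ ≤ range α' ⊔ maximalIdeal A ^ (n + 1 - c) • ⊤ :=
          sup_le le_sup_left <| comap_inf_le_range_sup hexact
            (by rintro _ ⟨x, rfl⟩; exact hα x) (by rintro _ ⟨x, rfl⟩; exact hβ x) hARα hARβ hn

/-- The claim in the proof of Lemma 2.5: for every `n ≥ c`,
`(β')⁻¹(𝔪^n N) ⊆ α'(L) + 𝔪^(n-c) M`. -/
theorem claim_in_proof_of_lemma_2_5 {A : Type*} [CommRing A] [IsLocalRing A] [IsNoetherianRing A]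
    {L M N : Type*} [AddCommGroup L] [Module A L] [AddCommGroup M] [Module A M]
    [AddCommGroup N] [Module A N]
    [Module.Finite A L] [Module.Finite A M] [Module.Finite A N]
    (α α' : L →ₗ[A] M) (β β' : M →ₗ[A] N)
    (hcx : β.comp α = 0) (hcx' : β'.comp α' = 0)
    (c : ℕ) (hc : 0 < c)
    (hexact : LinearMap.range α = LinearMap.ker β)
    (hα : ∀ x : L, α x - α' x ∈ ((maximalIdeal A) ^ (c + 1) • ⊤ : Submodule A M))
    (hβ : ∀ x : M, β x - β' x ∈ ((maximalIdeal A) ^ (c + 1) • ⊤ : Submodule A N))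
    (hARα : ArtinReesCond c α) (hARβ : ArtinReesCond c β) :
    ∀ n : ℕ, c ≤ n →
      Submodule.comap β' ((maximalIdeal A) ^ n • ⊤ : Submodule A N) ≤
        LinearMap.range α' ⊔ ((maximalIdeal A) ^ (n - c) • ⊤ : Submodule A M) :=
  claim_in_proof_of_lemma_2_5_general α α' β β' hcx' c hexact hα hβ hARα hARβ
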